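/- Let P_{UV} and Q_{UV} be pmfs on the product 𝒰×𝒱 of two finite alphabets with Q_{UV}(u,v) > 0 for all (u,v). Then min{ D(π_{UV} ‖ Q_{UV}) : π_{UV} a pmf on 𝒰×𝒱 with marginals π_U = P_U and π_V = P_V } ≥ D(P_V ‖ Q_V), and equality holds if and only if Σ_v P_V(v) Q_{U|V}(u|v) = P_U(u) for every u ∈ 𝒰, where Q_{U|V}(u|v) = Q_{UV}(u,v)/Q_V(v). -/

import Mathlib

/-- Base-2 Kullback–Leibler divergence between two pmfs on a finite alphabet. -/
noncomputable def klDiv2 {A : Type} [Fintype A] (p q : A → ℝ) : ℝ :=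
  ∑ a, p a * Real.logb 2 (p a / q a)

/-- `p` is a probability mass function on the finite alphabet `A`. -/
def IsPMF {A : Type} [Fintype A] (p : A → ℝ) : Prop :=
  (∀ a, 0 ≤ p a) ∧ ∑ a, p a = 1

/-- `𝒰`-marginal of a joint pmf on `U × V`. -/
noncomputable def margU {U V : Type} [Fintype U] [Fintype V] (p : U × V → ℝ) (u : U) : ℝ :=
  ∑ v, p (u, v)

/-- `𝒱`-marginal of a joint pmf on `U × V`. -/
noncomputable def margV {U V : Type} [Fintype U] [Fintype V] (p : U × V → ℝ) (v : V) : ℝ :=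
  ∑ u, p (u, v)

/-- Minimum of `D(π‖Q)` over all pmfs `π` on `U × V` with prescribed marginals. -/
noncomputable def minDivMarg {U V : Type} [Fintype U] [Fintype V]
    (Q : U × V → ℝ) (pU : U → ℝ) (pV : V → ℝ) : ℝ :=
  sInf {d | ∃ π : U × V → ℝ, IsPMF π ∧
    (∀ u, margU π u = pU u) ∧ (∀ v, margV π v = pV v) ∧ d = klDiv2 π Q}

/-!
Put `R(u,v) = P_V(v) Q_{U|V}(u|v)`. For every coupling `ρ` of `P_U` and `P_V` the chain rule gives
`D(ρ‖Q) = D(ρ‖R) + D(P_V‖Q_V)`, and the log-sum inequality on each row `u` gives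
`D(ρ‖R) ≥ D(P_U‖R_U)`. So the minimum is at least `D(P_V‖Q_V) + D(P_U‖R_U)`, and at equality
Gibbs' inequality forces `P_U = R_U`. Conversely, if `P_U = R_U` then `R` is itself a coupling,
and `D(R‖Q) = D(P_V‖Q_V)`.
-/

open Real Finset InformationTheory

section KLDivergence

variable {A : Type} [Fintype A]

lemma IsPMF.nonempty {p : A → ℝ} (hp : IsPMF p) : Nonempty A := by
  by_contra h
  rw [not_nonempty_iff] at h
  simpa using hp.2

lemma klDiv2_eq_div_log_two (p q : A → ℝ) :
    klDiv2 p q = (∑ a, p a * log (p a / q a)) / log 2 := by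
  simp only [klDiv2, logb, sum_div, mul_div_assoc]

lemma klDiv2_self (p : A → ℝ) : klDiv2 p p = 0 :=
  sum_eq_zero fun a _ => by by_cases h : p a = 0 <;> simp [h]

lemma mul_log_div_eq_mul_klFun_add (c : ℝ) {d : ℝ} (hd : 0 < d) :
    c * log (c / d) = d * klFun (c / d) + (c - d) := by
  rw [klFun_apply]
  field_simp
  ring

lemma klDiv2_eq_sum_mul_klFun {p q : A → ℝ} (hq : ∀ a, 0 < q a)
    (hpq : ∑ a, p a = ∑ a, q a) :
    klDiv2 p q = (∑ a, q a * klFun (p a / q a)) / log 2 := by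
  rw [klDiv2_eq_div_log_two, sum_congr rfl fun a _ => mul_log_div_eq_mul_klFun_add (p a) (hq a),
    sum_add_distrib, sum_sub_distrib, hpq, sub_self, add_zero]

lemma klDiv2_nonneg {p q : A → ℝ} (hp : ∀ a, 0 ≤ p a) (hq : ∀ a, 0 < q a)
    (hpq : ∑ a, p a = ∑ a, q a) : 0 ≤ klDiv2 p q := by
  rw [klDiv2_eq_sum_mul_klFun hq hpq]
  exact div_nonneg (sum_nonneg fun a _ =>
    mul_nonneg (hq a).le (klFun_nonneg (div_nonneg (hp a) (hq a).le))) (log_nonneg one_le_two)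

lemma klDiv2_eq_zero_iff {p q : A → ℝ} (hp : ∀ a, 0 ≤ p a) (hq : ∀ a, 0 < q a)
    (hpq : ∑ a, p a = ∑ a, q a) : klDiv2 p q = 0 ↔ p = q := by
  have hterm : ∀ a, 0 ≤ q a * klFun (p a / q a) := fun a =>
    mul_nonneg (hq a).le (klFun_nonneg (div_nonneg (hp a) (hq a).le))
  rw [klDiv2_eq_sum_mul_klFun hq hpq, div_eq_zero_iff, or_iff_left (log_pos one_lt_two).ne',
    sum_eq_zero_iff_of_nonneg fun a _ => hterm a, funext_iff]
  refine forall_congr' fun a => ?_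
  rw [mul_eq_zero, or_iff_right (hq a).ne', klFun_eq_zero_iff (div_nonneg (hp a) (hq a).le),
    div_eq_one_iff_eq (hq a).ne']
  simp

theorem sum_mul_log_div_sum_le {a b : A → ℝ} (ha : ∀ i, 0 ≤ a i) (hb : ∀ i, 0 ≤ b i)
    (hab : ∀ i, b i = 0 → a i = 0) :
    (∑ i, a i) * log ((∑ i, a i) / ∑ i, b i) ≤ ∑ i, a i * log (a i / b i) := by
  set r := (∑ i, a i) / ∑ i, b i
  have hr : 0 ≤ r := div_nonneg (sum_nonneg fun i _ => ha i) (sum_nonneg fun i _ => hb i)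
  have hrb : r * ∑ i, b i = ∑ i, a i := by
    refine div_mul_cancel_of_imp fun h => sum_eq_zero fun i _ => hab i ?_
    exact (sum_eq_zero_iff_of_nonneg fun i _ => hb i).1 h i (mem_univ i)
  -- `a log (a / (r b)) ≥ a - r b`, summed with `r = Σ a / Σ b`
  have hterm : ∀ i, a i * log r + (a i - r * b i) ≤ a i * log (a i / b i) := by
    intro i
    rcases (ha i).eq_or_lt with hai | hai
    · simp only [← hai, zero_mul, zero_div, log_zero, mul_zero, zero_sub, zero_add]
      exact neg_nonpos.2 (mul_nonneg hr (hb i))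
    have hbi : 0 < b i := (hb i).lt_of_ne' fun h => hai.ne' (hab i h)
    have hr : 0 < r := div_pos (hai.trans_le (single_le_sum (fun j _ => ha j) (mem_univ i)))
      (hbi.trans_le (single_le_sum (fun j _ => hb j) (mem_univ i)))
    have hsplit : log (a i / (r * b i)) = log (a i / b i) - log r := by
      rw [mul_comm, ← div_div, log_div (div_pos hai hbi).ne' hr.ne']
    have := mul_log_div_eq_mul_klFun_add (a i) (mul_pos hr hbi)
    rw [hsplit] at this
    nlinarith [mul_nonneg (mul_pos hr hbi).le (klFun_nonneg (div_pos hai (mul_pos hr hbi)).le)]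
  calc (∑ i, a i) * log r = ∑ i, (a i * log r + (a i - r * b i)) := by
        rw [sum_add_distrib, sum_sub_distrib, ← mul_sum, hrb, sub_self, add_zero, sum_mul]
    _ ≤ ∑ i, a i * log (a i / b i) := sum_le_sum fun i _ => hterm i

end KLDivergence

section Marginals

variable {U V : Type} [Fintype U] [Fintype V]

lemma sum_margU (f : U × V → ℝ) : ∑ u, margU f u = ∑ p, f p :=
  (Fintype.sum_prod_type f).symm

lemma sum_margV (f : U × V → ℝ) : ∑ v, margV f v = ∑ p, f p :=
  (Fintype.sum_prod_type_right f).symm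

lemma margU_nonneg {f : U × V → ℝ} (hf : ∀ p, 0 ≤ f p) (u : U) : 0 ≤ margU f u :=
  sum_nonneg fun v _ => hf (u, v)

lemma margV_nonneg {f : U × V → ℝ} (hf : ∀ p, 0 ≤ f p) (v : V) : 0 ≤ margV f v :=
  sum_nonneg fun u _ => hf (u, v)

lemma le_margV {f : U × V → ℝ} (hf : ∀ p, 0 ≤ f p) (p : U × V) : f p ≤ margV f p.2 :=
  single_le_sum (f := fun u => f (u, p.2)) (fun u _ => hf (u, p.2)) (mem_univ p.1)

theorem klDiv2_margU_le {ρ R : U × V → ℝ} (hρ : ∀ p, 0 ≤ ρ p) (hR : ∀ p, 0 ≤ R p)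
    (hρR : ∀ p, R p = 0 → ρ p = 0) : klDiv2 (margU ρ) (margU R) ≤ klDiv2 ρ R := by
  rw [klDiv2_eq_div_log_two, klDiv2_eq_div_log_two, Fintype.sum_prod_type]
  refine div_le_div_of_nonneg_right (sum_le_sum fun u _ => ?_) (log_nonneg one_le_two)
  exact sum_mul_log_div_sum_le (fun v => hρ _) (fun v => hR _) (fun v => hρR _)

end Marginals

section Reweighting

variable {U V : Type} [Fintype U] [Fintype V]

noncomputable def withMargV (Q : U × V → ℝ) (pV : V → ℝ) : U × V → ℝ :=
  fun p => pV p.2 * (Q p / margV Q p.2)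

lemma withMargV_nonneg {Q : U × V → ℝ} {pV : V → ℝ} (hQ : ∀ p, 0 ≤ Q p) (hpV : ∀ v, 0 ≤ pV v)
    (p : U × V) : 0 ≤ withMargV Q pV p :=
  mul_nonneg (hpV _) (div_nonneg (hQ p) (margV_nonneg hQ _))

lemma margV_withMargV {Q : U × V → ℝ} (hQ : ∀ v, margV Q v ≠ 0) (pV : V → ℝ) :
    margV (withMargV Q pV) = pV := by
  ext v
  simp only [margV, withMargV]
  rw [← mul_sum, ← sum_div]
  exact mul_right_eq_self₀.2 (Or.inl (div_self (hQ v)))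

lemma margU_withMargV_pos {Q : U × V → ℝ} {pV : V → ℝ} (hQ : ∀ p, 0 < Q p)
    (hpV : ∀ v, 0 ≤ pV v) (hpV_pos : ∃ v, 0 < pV v) (u : U) : 0 < margU (withMargV Q pV) u := by
  obtain ⟨v, hv⟩ := hpV_pos
  refine sum_pos' (fun w _ => withMargV_nonneg (fun p => (hQ p).le) hpV (u, w)) ⟨v, mem_univ v, ?_⟩
  exact mul_pos hv (div_pos (hQ _) ((hQ (u, v)).trans_le (le_margV (fun p => (hQ p).le) (u, v))))

theorem klDiv2_eq_klDiv2_withMargV_add {ρ Q : U × V → ℝ} (hρ : ∀ p, 0 ≤ ρ p)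
    (hQ : ∀ p, 0 < Q p) :
    klDiv2 ρ Q = klDiv2 ρ (withMargV Q (margV ρ)) + klDiv2 (margV ρ) (margV Q) := by
  have hterm : ∀ p, ρ p * logb 2 (ρ p / Q p) = ρ p * logb 2 (ρ p / withMargV Q (margV ρ) p)
      + ρ p * logb 2 (margV ρ p.2 / margV Q p.2) := by
    intro p
    rcases (hρ p).eq_or_lt with h | h
    · simp [← h]
    have hρV : 0 < margV ρ p.2 := h.trans_le (le_margV hρ p)
    have hQV : 0 < margV Q p.2 := (hQ p).trans_le (le_margV (fun p => (hQ p).le) p)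
    have hR : 0 < withMargV Q (margV ρ) p := mul_pos hρV (div_pos (hQ p) hQV)
    rw [← mul_add, ← logb_mul (div_pos h hR).ne' (div_pos hρV hQV).ne']
    congr 2
    simp only [withMargV]
    field_simp
  have hV : klDiv2 (margV ρ) (margV Q)
      = ∑ p : U × V, ρ p * logb 2 (margV ρ p.2 / margV Q p.2) := by
    rw [Fintype.sum_prod_type_right]
    exact sum_congr rfl fun v _ => sum_mul _ _ _
  rw [hV, klDiv2, klDiv2, ← sum_add_distrib]
  exact sum_congr rfl fun p _ => hterm p

theorem klDiv2_margU_withMargV_add_klDiv2_margV_le {ρ Q : U × V → ℝ} (hρ : ∀ p, 0 ≤ ρ p)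
    (hQ : ∀ p, 0 < Q p) :
    klDiv2 (margU ρ) (margU (withMargV Q (margV ρ))) + klDiv2 (margV ρ) (margV Q)
      ≤ klDiv2 ρ Q := by
  rw [klDiv2_eq_klDiv2_withMargV_add hρ hQ]
  gcongr
  refine klDiv2_margU_le hρ (withMargV_nonneg (fun p => (hQ p).le) (margV_nonneg hρ)) fun p hp => ?_
  have hρV : margV ρ p.2 = 0 := by
    rcases mul_eq_zero.1 hp with h | h
    · exact h
    · exact absurd h (div_pos (hQ p) ((hQ p).trans_le (le_margV (fun p => (hQ p).le) p))).ne'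
  exact le_antisymm (hρV ▸ le_margV hρ p) (hρ p)

end Reweighting

section Couplings

variable {U V : Type} [Fintype U] [Fintype V]

def IsCoupling (ρ : U × V → ℝ) (pU : U → ℝ) (pV : V → ℝ) : Prop :=
  IsPMF ρ ∧ (∀ u, margU ρ u = pU u) ∧ (∀ v, margV ρ v = pV v)

lemma le_minDivMarg {Q ρ₀ : U × V → ℝ} {pU : U → ℝ} {pV : V → ℝ} {c : ℝ}
    (h₀ : IsCoupling ρ₀ pU pV) (h : ∀ ρ, IsCoupling ρ pU pV → c ≤ klDiv2 ρ Q) :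
    c ≤ minDivMarg Q pU pV :=
  le_csInf ⟨_, ρ₀, h₀.1, h₀.2.1, h₀.2.2, rfl⟩ fun _ ⟨ρ, h1, h2, h3, hd⟩ => hd ▸ h ρ ⟨h1, h2, h3⟩

lemma minDivMarg_le {Q ρ : U × V → ℝ} {pU : U → ℝ} {pV : V → ℝ} {c : ℝ}
    (h : ∀ ρ', IsCoupling ρ' pU pV → c ≤ klDiv2 ρ' Q) (hρ : IsCoupling ρ pU pV) :
    minDivMarg Q pU pV ≤ klDiv2 ρ Q :=
  csInf_le ⟨c, fun _ ⟨ρ', h1, h2, h3, hd⟩ => hd ▸ h ρ' ⟨h1, h2, h3⟩⟩ ⟨ρ, hρ.1, hρ.2.1, hρ.2.2, rfl⟩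

end Couplings

theorem minDivMarg_ge_local_with_equality_iff_general
    {U V : Type} [Fintype U] [Fintype V]
    (P Q : U × V → ℝ) (hP : IsPMF P) (hQpos : ∀ p : U × V, 0 < Q p) :
    klDiv2 (margV P) (margV Q) ≤ minDivMarg Q (margU P) (margV P) ∧
    (minDivMarg Q (margU P) (margV P) = klDiv2 (margV P) (margV Q) ↔
      ∀ u : U, ∑ v : V, margV P v * (Q (u, v) / margV Q v) = margU P u) := by
  set R := withMargV Q (margV P) with hR_def
  have : Nonempty U := hP.nonempty.map Prod.fst
  have hRV : margV R = margV P :=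
    margV_withMargV (fun v => (sum_pos (fun u _ => hQpos (u, v)) univ_nonempty).ne') _
  have hRsum : ∑ p, R p = ∑ p, P p := by rw [← sum_margV, hRV, sum_margV]
  have hRU_pos : ∀ u, 0 < margU R u := by
    refine margU_withMargV_pos hQpos (margV_nonneg hP.1) ?_
    by_contra! h
    linarith [sum_nonpos fun v (_ : v ∈ univ) => h v, sum_margV P, hP.2]
  have hUsum : ∑ u, margU P u = ∑ u, margU R u := by rw [sum_margU, sum_margU, hRsum]
  have hlow : ∀ ρ, IsCoupling ρ (margU P) (margV P) →
      klDiv2 (margU P) (margU R) + klDiv2 (margV P) (margV Q) ≤ klDiv2 ρ Q := by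
    rintro ρ ⟨hρ, hρU, hρV⟩
    have key := klDiv2_margU_withMargV_add_klDiv2_margV_le hρ.1 hQpos
    rwa [funext hρU, funext hρV] at key
  have hgap := klDiv2_nonneg (margU_nonneg hP.1) hRU_pos hUsum
  have hmin := le_minDivMarg (Q := Q) ⟨hP, fun _ => rfl, fun _ => rfl⟩ hlow
  refine ⟨by linarith, fun heq u => ?_, fun hcond => ?_⟩
  · have hPU : margU P = margU R :=
      (klDiv2_eq_zero_iff (margU_nonneg hP.1) hRU_pos hUsum).1 (by linarith)
    exact (congrFun hPU u).symm
  · have hR : IsCoupling R (margU P) (margV P) :=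
      ⟨⟨withMargV_nonneg (fun p => (hQpos p).le) (margV_nonneg hP.1), hRsum.trans hP.2⟩,
        hcond, congrFun hRV⟩
    refine le_antisymm ?_ (by linarith)
    calc minDivMarg Q (margU P) (margV P) ≤ klDiv2 R Q := minDivMarg_le hlow hR
      _ = klDiv2 (margV P) (margV Q) := by
        rw [klDiv2_eq_klDiv2_withMargV_add hR.1.1 hQpos, hRV, ← hR_def, klDiv2_self, zero_add]

/-- The minimum of `D(π_{UV} ‖ Q_{UV})` over couplings of
`P_U` and `P_V` is at least `D(P_V ‖ Q_V)`, with equality if and only if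
`Σ_v P_V(v) Q_{U|V}(u|v) = P_U(u)` for every `u`. -/
theorem minDivMarg_ge_local_with_equality_iff
    {U V : Type} [Fintype U] [Fintype V]
    (P Q : U × V → ℝ) (hP : IsPMF P) (hQ : IsPMF Q) (hQpos : ∀ p : U × V, 0 < Q p) :
    klDiv2 (margV P) (margV Q) ≤ minDivMarg Q (margU P) (margV P) ∧
    (minDivMarg Q (margU P) (margV P) = klDiv2 (margV P) (margV Q) ↔
      ∀ u : U, ∑ v : V, margV P v * (Q (u, v) / margV Q v) = margU P u) :=
  minDivMarg_ge_local_with_equality_iff_general P Q hP hQpos
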